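/- If G is a graph with minimum degree δ(G) = 1, then the coalition number satisfies C(G) ≤ 2(Δ(G) + 1), where Δ(G) is the maximum degree of G. -/

import Mathlib

open SimpleGraph

attribute [local instance] Classical.propDecidable

def Dominates {V : Type*} (G : SimpleGraph V) (S : Set V) : Prop :=
  ∀ v, v ∉ S → ∃ u ∈ S, G.Adj u v

def Coalition {V : Type*} (G : SimpleGraph V) (A B : Set V) : Prop :=
  Disjoint A B ∧ ¬ Dominates G A ∧ ¬ Dominates G B ∧ Dominates G (A ∪ B)

def IsCoalitionPartition {V : Type*} (G : SimpleGraph V) (P : Finset (Set V)) : Prop :=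
  (∀ A ∈ P, A.Nonempty) ∧
  (∀ A ∈ P, ∀ B ∈ P, A ≠ B → Disjoint A B) ∧
  (∀ v : V, ∃ A ∈ P, v ∈ A) ∧
  (∀ A ∈ P, (Dominates G A ∧ ∃ v, A = {v}) ∨
    (¬ Dominates G A ∧ ∃ B ∈ P, B ≠ A ∧ Coalition G A B))

noncomputable def coalitionNumber {V : Type*} (G : SimpleGraph V) : ℕ :=
  sSup {n | ∃ P : Finset (Set V), IsCoalitionPartition G P ∧ P.card = n}

def coalitionGraph {V : Type*} (G : SimpleGraph V) (P : Finset (Set V)) :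
    SimpleGraph {A : Set V // A ∈ P} where
  Adj A B := Coalition G A.1 B.1
  symm := by
    constructor
    rintro A B ⟨d, na, nb, u⟩
    exact ⟨d.symm, nb, na, by rwa [Set.union_comm]⟩
  loopless := by
    constructor
    rintro ⟨A, hA⟩ ⟨d, na, nb, u⟩
    rw [Set.union_self] at u
    exact na u

/-
If `v` is a leaf with neighbour `u`, every dominating set meets `{u, v}`; let `X ∋ v` and `Y ∋ u`
be the classes of a coalition partition. Since the union of a coalition dominates, every other
class forms a coalition with `X` or `Y`.
A set `S` that fails to dominate some vertex `w` can only be completed to a dominating set by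
sets meeting the closed neighbourhood `N[w]`, so at most `Δ + 1` disjoint classes do so. Hence
each of `X`, `Y` has at most `Δ + 1` partners, and when `X ∪ Y` itself is not dominating the
partners of both together are at most `Δ + 1`, which leaves room for `X` and `Y`.
-/

open Finset

lemma Dominates.mono {V : Type*} {G : SimpleGraph V} {S T : Set V} (hST : S ⊆ T)
    (hS : Dominates G S) : Dominates G T := fun v hvT ↦
  let ⟨u, huS, huv⟩ := hS v (fun hvS ↦ hvT (hST hvS))
  ⟨u, hST huS, huv⟩

lemma Coalition.symm {V : Type*} {G : SimpleGraph V} {A B : Set V} (h : Coalition G A B) :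
    Coalition G B A :=
  ⟨h.1.symm, h.2.2.1, h.2.1, by rw [Set.union_comm]; exact h.2.2.2⟩

lemma Finset.card_filter_exists_mem_le {α : Type*} {P : Finset (Set α)}
    (hP : (P : Set (Set α)).PairwiseDisjoint id) (T : Finset α) :
    #{B ∈ P | ∃ t ∈ T, t ∈ B} ≤ #T := by
  refine card_le_card_of_forall_subsingleton (fun B t ↦ t ∈ B)
    (fun B hB ↦ (mem_filter.mp hB).2) ?_
  rintro t - A ⟨hA, htA⟩ B ⟨hB, htB⟩
  exact hP.elim (mem_filter.mp hA).1 (mem_filter.mp hB).1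
    (Set.not_disjoint_iff.mpr ⟨t, htA, htB⟩)

lemma Dominates.mem_or_mem_of_neighborFinset_eq_singleton {V : Type*} {G : SimpleGraph V}
    {u v : V} [Fintype (G.neighborSet v)] (hvu : G.neighborFinset v = {u}) {S : Set V}
    (hS : Dominates G S) : v ∈ S ∨ u ∈ S := by
  refine or_iff_not_imp_left.mpr fun hvS ↦ ?_
  obtain ⟨x, hxS, hxv⟩ := hS v hvS
  have hx : x ∈ G.neighborFinset v := (G.mem_neighborFinset v x).mpr hxv.symm
  rw [hvu, mem_singleton] at hx
  exact hx ▸ hxS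

section Coalitions

variable {V : Type*} [Fintype V] {G : SimpleGraph V} {P : Finset (Set V)}

lemma card_filter_dominates_union_le (hP : (P : Set (Set V)).PairwiseDisjoint id) {S : Set V}
    (hS : ¬ Dominates G S) : #{B ∈ P | Dominates G (S ∪ B)} ≤ G.maxDegree + 1 := by
  obtain ⟨w, hwS, hw⟩ : ∃ w ∉ S, ∀ x ∈ S, ¬ G.Adj x w := by
    simpa [Dominates] using hS
  have hmeet : {B ∈ P | Dominates G (S ∪ B)} ⊆
      {B ∈ P | ∃ t ∈ insert w (G.neighborFinset w), t ∈ B} := by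
    refine monotone_filter_right P fun B _ hB ↦ ?_
    by_cases hwB : w ∈ B
    · exact ⟨w, mem_insert_self _ _, hwB⟩
    obtain ⟨x, hx | hx, hxw⟩ := hB w (by simp [hwS, hwB])
    · exact absurd hxw (hw x hx)
    · exact ⟨x, mem_insert_of_mem (by simpa using hxw.symm), hx⟩
  calc #{B ∈ P | Dominates G (S ∪ B)}
      ≤ #(insert w (G.neighborFinset w)) :=
        (card_le_card hmeet).trans (card_filter_exists_mem_le hP _)
    _ ≤ G.degree w + 1 := card_insert_le _ _
    _ ≤ G.maxDegree + 1 := by gcongr; exact G.degree_le_maxDegree w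

omit [Fintype V] in
lemma card_filter_coalition_eq_zero {S : Set V} (hS : Dominates G S) :
    #{B ∈ P | Coalition G S B} = 0 := by
  simp [filter_false_of_mem fun B _ (h : Coalition G S B) ↦ h.2.1 hS]

lemma card_filter_coalition_le (hP : (P : Set (Set V)).PairwiseDisjoint id) (S : Set V) :
    #{B ∈ P | Coalition G S B} ≤ G.maxDegree + 1 := by
  by_cases hS : Dominates G S
  · simp [card_filter_coalition_eq_zero hS]
  · exact (card_le_card (monotone_filter_right P fun B _ h ↦ h.2.2.2)).trans
      (card_filter_dominates_union_le hP hS)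

lemma card_le_of_forall_eq_or_eq_or_coalition (hP : (P : Set (Set V)).PairwiseDisjoint id)
    (hΔ : 1 ≤ G.maxDegree) {X Y : Set V} (hX : X ∈ P) (hY : Y ∈ P)
    (hcover : ∀ A ∈ P, A = X ∨ A = Y ∨ Coalition G X A ∨ Coalition G Y A) :
    #P ≤ 2 * (G.maxDegree + 1) := by
  set F := {B ∈ P | Coalition G X B} ∪ {B ∈ P | Coalition G Y B}
  have hF : #F ≤ #{B ∈ P | Coalition G X B} + #{B ∈ P | Coalition G Y B} := card_union_le _ _
  have hFX := card_filter_coalition_le (G := G) hP X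
  have hFY := card_filter_coalition_le (G := G) hP Y
  have hPF : #P ≤ #F + 2 := by
    have hsplit : P ⊆ insert X (insert Y F) := fun A hA ↦ by
      rcases hcover A hA with rfl | rfl | h | h <;> simp [F, *]
    grw [card_le_card hsplit, card_insert_le, card_insert_le]
  by_cases hDX : Dominates G X
  · have := card_filter_coalition_eq_zero (P := P) hDX
    omega
  by_cases hDY : Dominates G Y
  · have := card_filter_coalition_eq_zero (P := P) hDY
    omega
  by_cases hDXY : Dominates G (X ∪ Y)
  · have hXY : Coalition G X Y := by
      refine ⟨hP hX hY ?_, hDX, hDY, hDXY⟩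
      rintro rfl
      exact hDX (by simpa using hDXY)
    have hPF : P ⊆ F := fun A hA ↦ by
      rcases hcover A hA with rfl | rfl | h | h <;> simp [F, hXY.symm, *]
    grw [card_le_card hPF]
    omega
  · have hFD : F ⊆ {B ∈ P | Dominates G (X ∪ Y ∪ B)} := fun B hB ↦ by
      simp only [F, mem_union, mem_filter] at hB ⊢
      refine ⟨hB.elim And.left And.left, ?_⟩
      rcases hB with ⟨-, h⟩ | ⟨-, h⟩
      · exact h.2.2.2.mono (Set.union_subset_union_left B Set.subset_union_left)
      · exact h.2.2.2.mono (Set.union_subset_union_left B Set.subset_union_right)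
    have := card_filter_dominates_union_le hP hDXY
    grw [card_le_card hFD] at hPF
    omega

end Coalitions

namespace IsCoalitionPartition

variable {V : Type*} {G : SimpleGraph V} {P : Finset (Set V)}

lemma pairwiseDisjoint (hP : IsCoalitionPartition G P) : (P : Set (Set V)).PairwiseDisjoint id :=
  fun A hA B hB ↦ hP.2.1 A hA B hB

lemma eq_of_mem_of_mem (hP : IsCoalitionPartition G P) {A B : Set V} (hA : A ∈ P) (hB : B ∈ P)
    {x : V} (hxA : x ∈ A) (hxB : x ∈ B) : A = B :=
  by_contra fun hAB ↦ Set.disjoint_left.mp (hP.2.1 A hA B hB hAB) hxA hxB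

lemma eq_or_eq_or_coalition {u v : V} [Fintype (G.neighborSet v)] {X Y : Set V}
    (hP : IsCoalitionPartition G P) (hvu : G.neighborFinset v = {u}) (hX : X ∈ P) (hvX : v ∈ X)
    (hY : Y ∈ P) (huY : u ∈ Y) {A : Set V} (hA : A ∈ P) :
    A = X ∨ A = Y ∨ Coalition G X A ∨ Coalition G Y A := by
  rcases hP.2.2.2 A hA with ⟨hD, -⟩ | ⟨-, B, hB, -, hAB⟩
  · rcases hD.mem_or_mem_of_neighborFinset_eq_singleton hvu with hvA | huA
    · exact .inl (hP.eq_of_mem_of_mem hA hX hvA hvX)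
    · exact .inr (.inl (hP.eq_of_mem_of_mem hA hY huA huY))
  · rcases hAB.2.2.2.mem_or_mem_of_neighborFinset_eq_singleton hvu with (hvA | hvB) | (huA | huB)
    · exact .inl (hP.eq_of_mem_of_mem hA hX hvA hvX)
    · exact .inr (.inr (.inl (hP.eq_of_mem_of_mem hB hX hvB hvX ▸ hAB.symm)))
    · exact .inr (.inl (hP.eq_of_mem_of_mem hA hY huA huY))
    · exact .inr (.inr (.inr (hP.eq_of_mem_of_mem hB hY huB huY ▸ hAB.symm)))

lemma card_le_of_neighborFinset_eq_singleton [Fintype V] {u v : V} (hP : IsCoalitionPartition G P)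
    (hvu : G.neighborFinset v = {u}) : #P ≤ 2 * (G.maxDegree + 1) := by
  obtain ⟨X, hX, hvX⟩ := hP.2.2.1 v
  obtain ⟨Y, hY, huY⟩ := hP.2.2.1 u
  have hΔ : 1 ≤ G.maxDegree := by
    simpa [← card_neighborFinset_eq_degree, hvu] using G.degree_le_maxDegree v
  exact card_le_of_forall_eq_or_eq_or_coalition hP.pairwiseDisjoint hΔ hX hY
    fun A hA ↦ hP.eq_or_eq_or_coalition hvu hX hvX hY huY hA

end IsCoalitionPartition

lemma SimpleGraph.exists_neighborFinset_eq_singleton_of_minDegree_eq_one {V : Type*} [Fintype V]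
    {G : SimpleGraph V} [DecidableRel G.Adj] (hδ : G.minDegree = 1) :
    ∃ v u, G.neighborFinset v = {u} := by
  have : Nonempty V := by
    by_contra h
    rw [not_nonempty_iff] at h
    simp [minDegree_of_subsingleton] at hδ
  obtain ⟨v, hv⟩ := G.exists_minimal_degree_vertex
  exact ⟨v, card_eq_one.mp (by rw [card_neighborFinset_eq_degree, ← hv, hδ])⟩

theorem stmt5 {V : Type*} [Fintype V] (G : SimpleGraph V)
    (hδ : G.minDegree = 1) :
    coalitionNumber G ≤ 2 * (G.maxDegree + 1) := by
  obtain ⟨v, u, hvu⟩ := exists_neighborFinset_eq_singleton_of_minDegree_eq_one hδ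
  refine csSup_le' ?_
  rintro n ⟨P, hP, rfl⟩
  exact hP.card_le_of_neighborFinset_eq_singleton hvu
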